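/- For fixed b > 0, the first-order Marcum Q function Q₁(a, b) is strictly increasing in a on (0, ∞). -/

import Mathlib

open Real MeasureTheory Set Filter Metric Topology intervalIntegral

set_option maxHeartbeats 1000000

lemma hasDerivAt_cosInt (g : ℝ → ℝ) (hg : Continuous g) (hg1 : ∀ θ, |g θ| ≤ 1) (x : ℝ) :
    HasDerivAt (fun y => ∫ θ in (0:ℝ)..Real.pi, g θ * Real.exp (y * Real.cos θ))
      (∫ θ in (0:ℝ)..Real.pi, g θ * Real.cos θ * Real.exp (x * Real.cos θ)) x := by
  have hgc : ∀ y : ℝ, Continuous fun θ => g θ * Real.exp (y * Real.cos θ) :=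
    fun y => hg.mul ((continuous_const.mul continuous_cos).rexp)
  have hgc' : Continuous fun θ => g θ * Real.cos θ * Real.exp (x * Real.cos θ) :=
    (hg.mul continuous_cos).mul ((continuous_const.mul continuous_cos).rexp)
  have h := intervalIntegral.hasDerivAt_integral_of_dominated_loc_of_deriv_le
    (𝕜 := ℝ)
    (F := fun y θ => g θ * Real.exp (y * Real.cos θ))
    (F' := fun y θ => g θ * Real.cos θ * Real.exp (y * Real.cos θ))
    (x₀ := x) (a := 0) (b := Real.pi) (μ := volume)
    (bound := fun _ => Real.exp (|x| + 1))
    (s := ball x 1) (ball_mem_nhds x one_pos)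
    (Filter.Eventually.of_forall fun y => ((hgc y).aestronglyMeasurable).restrict)
    ((hgc x).intervalIntegrable 0 Real.pi)
    (hgc'.aestronglyMeasurable).restrict
    ?_ intervalIntegrable_const ?_
  · exact h.2
  · filter_upwards with θ hθ y hy
    have h1 : |Real.cos θ| ≤ 1 := abs_cos_le_one θ
    have hy' : |y - x| < 1 := by simpa [Real.dist_eq] using mem_ball.1 hy
    have h2 : y * Real.cos θ ≤ |x| + 1 :=
      calc y * Real.cos θ ≤ |y * Real.cos θ| := le_abs_self _
        _ = |y| * |Real.cos θ| := abs_mul _ _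
        _ ≤ |y| * 1 := by nlinarith [abs_nonneg y]
        _ ≤ |x| + 1 := by
            have := abs_sub_abs_le_abs_sub y x
            rw [mul_one]; linarith
    calc ‖g θ * Real.cos θ * Real.exp (y * Real.cos θ)‖
        = |g θ| * |Real.cos θ| * Real.exp (y * Real.cos θ) := by
          rw [Real.norm_eq_abs, abs_mul, abs_mul, abs_of_pos (Real.exp_pos _)]
      _ ≤ 1 * 1 * Real.exp (|x| + 1) :=
          mul_le_mul (mul_le_mul (hg1 θ) h1 (abs_nonneg _) one_pos.le)
            (Real.exp_le_exp.2 h2) (Real.exp_pos _).le (by norm_num)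
      _ = Real.exp (|x| + 1) := by ring
  · filter_upwards with θ hθ y hy
    have h3 : HasDerivAt (fun y : ℝ => y * Real.cos θ) (Real.cos θ) y :=
      hasDerivAt_mul_const _
    have h4 := (h3.exp).const_mul (g θ)
    exact h4.congr_deriv (by ring)

/-- The modified Bessel function of the first kind of order 0,
via its standard integral representation. -/
noncomputable def besselI0 (x : ℝ) : ℝ :=
  (1 / Real.pi) * ∫ θ in (0:ℝ)..Real.pi, Real.exp (x * Real.cos θ)

noncomputable def besselI1 (x : ℝ) : ℝ :=
  (1 / Real.pi) * ∫ θ in (0:ℝ)..Real.pi, Real.cos θ * Real.exp (x * Real.cos θ)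

noncomputable def besselI2 (x : ℝ) : ℝ :=
  (1 / Real.pi) * ∫ θ in (0:ℝ)..Real.pi, Real.cos θ * Real.cos θ * Real.exp (x * Real.cos θ)

lemma hasDerivAt_besselI0 (x : ℝ) : HasDerivAt besselI0 (besselI1 x) x := by
  have h := (hasDerivAt_cosInt (fun _ => 1) continuous_const (fun θ => by norm_num) x).const_mul
    (1 / Real.pi)
  simp only [one_mul] at h
  unfold besselI0 besselI1
  exact h

lemma hasDerivAt_besselI1 (x : ℝ) : HasDerivAt besselI1 (besselI2 x) x := by
  have h := (hasDerivAt_cosInt Real.cos continuous_cos (fun θ => abs_cos_le_one θ) x).const_mul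
    (1 / Real.pi)
  exact h

lemma continuous_besselI0 : Continuous besselI0 :=
  continuous_iff_continuousAt.2 fun x => (hasDerivAt_besselI0 x).continuousAt

lemma continuous_besselI1 : Continuous besselI1 :=
  continuous_iff_continuousAt.2 fun x => (hasDerivAt_besselI1 x).continuousAt

lemma abs_intInt_le (f : ℝ → ℝ) (hf : ∀ θ, |f θ| ≤ 1) (x : ℝ) :
    |(1 / Real.pi) * ∫ θ in (0:ℝ)..Real.pi, f θ * Real.exp (x * Real.cos θ)| ≤ Real.exp |x| := by
  have hπ : (0:ℝ) < Real.pi := Real.pi_pos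
  have h := intervalIntegral.norm_integral_le_of_norm_le_const (C := Real.exp |x|)
    (f := fun θ => f θ * Real.exp (x * Real.cos θ)) (a := (0:ℝ)) (b := Real.pi)
    (fun θ _ => by
      rw [Real.norm_eq_abs, abs_mul, abs_of_pos (Real.exp_pos _)]
      calc |f θ| * Real.exp (x * Real.cos θ) ≤ 1 * Real.exp |x| := by
            apply mul_le_mul (hf θ) _ (Real.exp_pos _).le one_pos.le
            apply Real.exp_le_exp.2
            calc x * Real.cos θ ≤ |x * Real.cos θ| := le_abs_self _
              _ = |x| * |Real.cos θ| := abs_mul _ _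
              _ ≤ |x| * 1 := by nlinarith [abs_nonneg x, abs_cos_le_one θ]
              _ = |x| := mul_one _
        _ = Real.exp |x| := one_mul _)
  have h2 : |∫ θ in (0:ℝ)..Real.pi, f θ * Real.exp (x * Real.cos θ)|
      ≤ Real.exp |x| * Real.pi := by
    simpa [Real.norm_eq_abs, abs_of_pos hπ] using h
  rw [abs_mul, abs_of_pos (by positivity : (0:ℝ) < 1 / Real.pi)]
  calc (1 / Real.pi) * |∫ θ in (0:ℝ)..Real.pi, f θ * Real.exp (x * Real.cos θ)|
      ≤ (1 / Real.pi) * (Real.exp |x| * Real.pi) := by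
        apply mul_le_mul_of_nonneg_left h2 (by positivity)
    _ = Real.exp |x| := by field_simp

lemma abs_besselI0_le (x : ℝ) : |besselI0 x| ≤ Real.exp |x| := by
  have := abs_intInt_le (fun _ => 1) (fun θ => by norm_num) x
  simpa [besselI0] using this

lemma abs_besselI1_le (x : ℝ) : |besselI1 x| ≤ Real.exp |x| :=
  abs_intInt_le Real.cos (fun θ => abs_cos_le_one θ) x

/-- Bessel recurrence: `I₁(x) + x I₂(x) = x I₀(x)`. -/
lemma bessel_rec (x : ℝ) : besselI1 x + x * besselI2 x = x * besselI0 x := by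
  have hπ : (0:ℝ) < Real.pi := Real.pi_pos
  have hcA : Continuous fun θ => Real.cos θ * Real.exp (x * Real.cos θ) :=
    continuous_cos.mul ((continuous_const.mul continuous_cos).rexp)
  have hcB : Continuous fun θ => Real.cos θ * Real.cos θ * Real.exp (x * Real.cos θ) :=
    (continuous_cos.mul continuous_cos).mul ((continuous_const.mul continuous_cos).rexp)
  have hcC : Continuous fun θ => Real.exp (x * Real.cos θ) :=
    (continuous_const.mul continuous_cos).rexp
  have hderiv : ∀ θ ∈ Set.uIcc (0:ℝ) Real.pi,
      HasDerivAt (fun θ => Real.sin θ * Real.exp (x * Real.cos θ))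
        (Real.cos θ * Real.exp (x * Real.cos θ)
          + x * (Real.cos θ * Real.cos θ * Real.exp (x * Real.cos θ))
          - x * Real.exp (x * Real.cos θ)) θ := by
    intro θ _
    have h1 : HasDerivAt Real.sin (Real.cos θ) θ := Real.hasDerivAt_sin θ
    have h2 : HasDerivAt (fun θ => x * Real.cos θ) (x * (-Real.sin θ)) θ :=
      (Real.hasDerivAt_cos θ).const_mul x
    have h4 := h1.mul h2.exp
    refine h4.congr_deriv ?_
    linear_combination (-(x * Real.exp (x * Real.cos θ))) * (Real.sin_sq_add_cos_sq θ)
  have key := intervalIntegral.integral_eq_sub_of_hasDerivAt hderiv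
    (((hcA.add (continuous_const.mul hcB)).sub (continuous_const.mul hcC)).intervalIntegrable 0 Real.pi)
  simp only [Real.sin_pi, Real.sin_zero, zero_mul, sub_zero] at key
  rw [intervalIntegral.integral_sub
      (f := fun y => Real.cos y * Real.exp (x * Real.cos y)
        + x * (Real.cos y * Real.cos y * Real.exp (x * Real.cos y)))
      (g := fun y => x * Real.exp (x * Real.cos y)) ((hcA.add (continuous_const.mul hcB)).intervalIntegrable _ _)
      ((continuous_const.mul hcC).intervalIntegrable _ _),
    intervalIntegral.integral_add (f := fun y => Real.cos y * Real.exp (x * Real.cos y))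
      (g := fun y => x * (Real.cos y * Real.cos y * Real.exp (x * Real.cos y)))
      (hcA.intervalIntegrable _ _)
      ((continuous_const.mul hcB).intervalIntegrable _ _),
    intervalIntegral.integral_const_mul, intervalIntegral.integral_const_mul] at key
  simp only [besselI0, besselI1, besselI2]
  linear_combination (1 / Real.pi) * key

lemma hasDerivAt_f (t a : ℝ) :
    HasDerivAt (fun a => t * Real.exp (-(t ^ 2 + a ^ 2) / 2) * besselI0 (a * t))
      (t * Real.exp (-(t ^ 2 + a ^ 2) / 2) * (t * besselI1 (a * t) - a * besselI0 (a * t))) a := by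
  have h1 : HasDerivAt (fun a : ℝ => -(t ^ 2 + a ^ 2) / 2) (-a) a := by
    have := (((hasDerivAt_pow 2 a).const_add (t ^ 2)).neg).div_const 2
    exact this.congr_deriv (by ring)
  have h2 := h1.exp.const_mul t
  have h3 : HasDerivAt (fun a : ℝ => besselI0 (a * t)) (besselI1 (a * t) * t) a :=
    (hasDerivAt_besselI0 (a * t)).comp (h := fun a => a * t) a (hasDerivAt_mul_const t)
  have h4 := h2.mul h3
  exact h4.congr_deriv (by ring)

lemma hasDerivAt_G (a t : ℝ) :
    HasDerivAt (fun t => Real.exp (-(t ^ 2 + a ^ 2) / 2) * (t * besselI1 (a * t)))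
      (-(t * Real.exp (-(t ^ 2 + a ^ 2) / 2)
        * (t * besselI1 (a * t) - a * besselI0 (a * t)))) t := by
  have h1 : HasDerivAt (fun t : ℝ => -(t ^ 2 + a ^ 2) / 2) (-t) t := by
    have := (((hasDerivAt_pow 2 t).add_const (a ^ 2)).neg).div_const 2
    exact this.congr_deriv (by ring)
  have h2 := h1.exp
  have hmul : HasDerivAt (fun t : ℝ => a * t) a t := by
    simpa using (hasDerivAt_id t).const_mul a
  have h3 : HasDerivAt (fun t : ℝ => besselI1 (a * t)) (besselI2 (a * t) * a) t :=
    (hasDerivAt_besselI1 (a * t)).comp t hmul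
  have h4 := (hasDerivAt_id t).mul h3
  have h5 := h2.mul h4
  refine h5.congr_deriv ?_
  have hrec := bessel_rec (a * t)
  simp only [id_eq, Pi.mul_apply] at *
  nlinarith [Real.exp_pos (-(t ^ 2 + a ^ 2) / 2), hrec]

lemma bound_ineq (A t : ℝ) (hA : 0 ≤ A) (ht : 0 ≤ t) :
    (t * (t + A) + 1) * Real.exp (A * t - t ^ 2 / 2)
      ≤ 17 * Real.exp (A ^ 2 / 8 + 2 * A ^ 2) * Real.exp (-t ^ 2 / 4) := by
  have h1 : t * (t + A) + 1 ≤ 17 * Real.exp ((t ^ 2 + A ^ 2) / 8) := by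
    have hx : (t ^ 2 + A ^ 2) / 8 ≤ Real.exp ((t ^ 2 + A ^ 2) / 8) :=
      le_trans (by linarith [Real.add_one_le_exp ((t ^ 2 + A ^ 2) / 8)])
        le_rfl
    have h1e : (1:ℝ) ≤ Real.exp ((t ^ 2 + A ^ 2) / 8) := Real.one_le_exp (by positivity)
    nlinarith [sq_nonneg (t - A)]
  calc (t * (t + A) + 1) * Real.exp (A * t - t ^ 2 / 2)
      ≤ (17 * Real.exp ((t ^ 2 + A ^ 2) / 8)) * Real.exp (A * t - t ^ 2 / 2) :=
        mul_le_mul_of_nonneg_right h1 (Real.exp_pos _).le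
    _ = 17 * Real.exp ((t ^ 2 + A ^ 2) / 8 + (A * t - t ^ 2 / 2)) := by
        rw [mul_assoc, ← Real.exp_add]
    _ ≤ 17 * Real.exp (A ^ 2 / 8 + 2 * A ^ 2 + -t ^ 2 / 4) := by
        have : (t ^ 2 + A ^ 2) / 8 + (A * t - t ^ 2 / 2)
            ≤ A ^ 2 / 8 + 2 * A ^ 2 + -t ^ 2 / 4 := by nlinarith [sq_nonneg (t - 4 * A)]
        exact mul_le_mul_of_nonneg_left (Real.exp_le_exp.2 this) (by norm_num)
    _ = 17 * Real.exp (A ^ 2 / 8 + 2 * A ^ 2) * Real.exp (-t ^ 2 / 4) := by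
        rw [mul_assoc, ← Real.exp_add]

lemma integrable_bound (C b : ℝ) :
    IntegrableOn (fun t : ℝ => C * Real.exp (-t ^ 2 / 4)) (Ioi b) := by
  have h : Integrable (fun t : ℝ => Real.exp (-(1/4 : ℝ) * t ^ 2)) :=
    integrable_exp_neg_mul_sq (by norm_num)
  have heq : (fun t : ℝ => C * Real.exp (-(1/4 : ℝ) * t ^ 2))
      = fun t : ℝ => C * Real.exp (-t ^ 2 / 4) := by
    funext t; ring_nf
  exact (heq ▸ (h.const_mul C)).integrableOn

lemma f_bound (A x t : ℝ) (hx : 0 ≤ x) (hxA : x ≤ A) (ht : 0 ≤ t) :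
    ‖t * Real.exp (-(t ^ 2 + x ^ 2) / 2) * besselI0 (x * t)‖
      ≤ 17 * Real.exp (A ^ 2 / 8 + 2 * A ^ 2) * Real.exp (-t ^ 2 / 4) := by
  have hA : 0 ≤ A := hx.trans hxA
  have hI : |besselI0 (x * t)| ≤ Real.exp (x * t) := by
    simpa [abs_of_nonneg (mul_nonneg hx ht)] using abs_besselI0_le (x * t)
  refine le_trans ?_ (bound_ineq A t hA ht)
  rw [Real.norm_eq_abs, abs_mul, abs_mul, abs_of_nonneg ht,
    abs_of_pos (Real.exp_pos _)]
  calc t * Real.exp (-(t ^ 2 + x ^ 2) / 2) * |besselI0 (x * t)|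
      ≤ t * Real.exp (-(t ^ 2 + x ^ 2) / 2) * Real.exp (x * t) := by
        apply mul_le_mul_of_nonneg_left hI (by positivity)
    _ = t * Real.exp (-(t ^ 2 + x ^ 2) / 2 + x * t) := by rw [mul_assoc, ← Real.exp_add]
    _ ≤ (t * (t + A) + 1) * Real.exp (A * t - t ^ 2 / 2) := by
        apply mul_le_mul
        · nlinarith [sq_nonneg (t - 1)]
        · apply Real.exp_le_exp.2; nlinarith [sq_nonneg x]
        · positivity
        · nlinarith

lemma f'_bound (A x t : ℝ) (hx : 0 ≤ x) (hxA : x ≤ A) (ht : 0 ≤ t) :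
    ‖t * Real.exp (-(t ^ 2 + x ^ 2) / 2) * (t * besselI1 (x * t) - x * besselI0 (x * t))‖
      ≤ 17 * Real.exp (A ^ 2 / 8 + 2 * A ^ 2) * Real.exp (-t ^ 2 / 4) := by
  have hA : 0 ≤ A := hx.trans hxA
  have hxt : |x * t| = x * t := abs_of_nonneg (mul_nonneg hx ht)
  have hI0 : |besselI0 (x * t)| ≤ Real.exp (x * t) := by
    simpa [hxt] using abs_besselI0_le (x * t)
  have hI1 : |besselI1 (x * t)| ≤ Real.exp (x * t) := by
    simpa [hxt] using abs_besselI1_le (x * t)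
  refine le_trans ?_ (bound_ineq A t hA ht)
  rw [Real.norm_eq_abs, abs_mul, abs_mul, abs_of_nonneg ht, abs_of_pos (Real.exp_pos _)]
  have habs : |t * besselI1 (x * t) - x * besselI0 (x * t)| ≤ (t + x) * Real.exp (x * t) := by
    calc |t * besselI1 (x * t) - x * besselI0 (x * t)|
        ≤ |t * besselI1 (x * t)| + |x * besselI0 (x * t)| := abs_sub _ _
      _ = t * |besselI1 (x * t)| + x * |besselI0 (x * t)| := by
          rw [abs_mul, abs_mul, abs_of_nonneg ht, abs_of_nonneg hx]
      _ ≤ t * Real.exp (x * t) + x * Real.exp (x * t) := by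
          apply add_le_add (mul_le_mul_of_nonneg_left hI1 ht)
            (mul_le_mul_of_nonneg_left hI0 hx)
      _ = (t + x) * Real.exp (x * t) := by ring
  calc t * Real.exp (-(t ^ 2 + x ^ 2) / 2) * |t * besselI1 (x * t) - x * besselI0 (x * t)|
      ≤ t * Real.exp (-(t ^ 2 + x ^ 2) / 2) * ((t + x) * Real.exp (x * t)) := by
        apply mul_le_mul_of_nonneg_left habs (by positivity)
    _ = t * (t + x) * Real.exp (-(t ^ 2 + x ^ 2) / 2 + x * t) := by
        rw [show t * Real.exp (-(t ^ 2 + x ^ 2) / 2) * ((t + x) * Real.exp (x * t))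
            = t * (t + x) * (Real.exp (-(t ^ 2 + x ^ 2) / 2) * Real.exp (x * t)) from by ring,
          ← Real.exp_add]
    _ ≤ (t * (t + A) + 1) * Real.exp (A * t - t ^ 2 / 2) := by
        apply mul_le_mul
        · nlinarith
        · apply Real.exp_le_exp.2; nlinarith [sq_nonneg x]
        · positivity
        · nlinarith

lemma besselI1_pos (x : ℝ) (hx : 0 < x) : 0 < besselI1 x := by
  have hπ : (0:ℝ) < Real.pi := Real.pi_pos
  have hsplit : (∫ θ in (0:ℝ)..Real.pi, Real.cos θ * Real.exp (x * Real.cos θ))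
      = (∫ θ in (0:ℝ)..(Real.pi/2), Real.cos θ * Real.exp (x * Real.cos θ))
        + ∫ θ in (Real.pi/2)..Real.pi, Real.cos θ * Real.exp (x * Real.cos θ) := by
    rw [intervalIntegral.integral_add_adjacent_intervals] <;>
      exact (continuous_cos.mul ((continuous_const.mul continuous_cos).rexp)).intervalIntegrable _ _
  have hsub : (∫ θ in (Real.pi/2)..Real.pi, Real.cos θ * Real.exp (x * Real.cos θ))
      = ∫ u in (0:ℝ)..(Real.pi/2),
          Real.cos (Real.pi - u) * Real.exp (x * Real.cos (Real.pi - u)) := by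
    rw [intervalIntegral.integral_comp_sub_left
      (fun θ => Real.cos θ * Real.exp (x * Real.cos θ)) Real.pi]
    norm_num [sub_half]
  have hkey : (∫ θ in (0:ℝ)..Real.pi, Real.cos θ * Real.exp (x * Real.cos θ))
      = ∫ θ in (0:ℝ)..(Real.pi/2),
          Real.cos θ * (Real.exp (x * Real.cos θ) - Real.exp (-(x * Real.cos θ))) := by
    rw [hsplit, hsub, ← intervalIntegral.integral_add
      (f := fun θ => Real.cos θ * Real.exp (x * Real.cos θ))
      ((continuous_cos.mul ((continuous_const.mul continuous_cos).rexp)).intervalIntegrable _ _)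
      (((by fun_prop : Continuous fun u : ℝ =>
          Real.cos (Real.pi - u) * Real.exp (x * Real.cos (Real.pi - u)))).intervalIntegrable _ _)]
    apply intervalIntegral.integral_congr
    intro θ _
    simp only [Real.cos_pi_sub]
    ring_nf
  have hpos : 0 < ∫ θ in (0:ℝ)..(Real.pi/2),
      Real.cos θ * (Real.exp (x * Real.cos θ) - Real.exp (-(x * Real.cos θ))) := by
    apply intervalIntegral.intervalIntegral_pos_of_pos_on
    · exact ((continuous_cos.mul (((continuous_const.mul continuous_cos).rexp).sub
        ((continuous_const.mul continuous_cos).neg.rexp))).intervalIntegrable _ _)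
    · intro θ hθ
      obtain ⟨h1, h2⟩ := hθ
      have hc : 0 < Real.cos θ := Real.cos_pos_of_mem_Ioo ⟨by linarith, h2⟩
      have he : Real.exp (-(x * Real.cos θ)) < Real.exp (x * Real.cos θ) := by
        apply Real.exp_lt_exp.2
        nlinarith
      nlinarith
    · linarith
  unfold besselI1
  rw [hkey]
  positivity

/-- The first-order Marcum Q function `Q₁(a,b) = ∫_b^∞ t e^{−(t²+a²)/2} I₀(at) dt`. -/
noncomputable def marcumQ (a b : ℝ) : ℝ :=
  ∫ t in Set.Ioi b, t * Real.exp (-(t ^ 2 + a ^ 2) / 2) * besselI0 (a * t)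

lemma tendsto_bound (C : ℝ) :
    Tendsto (fun t : ℝ => C * Real.exp (-t ^ 2 / 4)) atTop (𝓝 0) := by
  have h1 : Tendsto (fun t : ℝ => -t ^ 2 / 4) atTop atBot := by
    have h2 : Tendsto (fun t : ℝ => t ^ 2 / 4) atTop atTop :=
      (tendsto_pow_atTop two_ne_zero).atTop_div_const (by norm_num)
    have := tendsto_neg_atBot_iff.2 h2
    simpa [neg_div] using this
  have := (Real.tendsto_exp_atBot.comp h1).const_mul C
  simpa using this

lemma G_tendsto (a : ℝ) (ha : 0 < a) :
    Tendsto (fun t => Real.exp (-(t ^ 2 + a ^ 2) / 2) * (t * besselI1 (a * t)))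
      atTop (𝓝 0) := by
  refine squeeze_zero_norm' ?_ (tendsto_bound (17 * Real.exp (a ^ 2 / 8 + 2 * a ^ 2)))
  filter_upwards [eventually_ge_atTop (0:ℝ)] with t ht
  have hI1 : |besselI1 (a * t)| ≤ Real.exp (a * t) := by
    simpa [abs_of_nonneg (mul_nonneg ha.le ht)] using abs_besselI1_le (a * t)
  refine le_trans ?_ (bound_ineq a t ha.le ht)
  rw [Real.norm_eq_abs, abs_mul, abs_mul, abs_of_nonneg ht, abs_of_pos (Real.exp_pos _)]
  calc Real.exp (-(t ^ 2 + a ^ 2) / 2) * (t * |besselI1 (a * t)|)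
      ≤ Real.exp (-(t ^ 2 + a ^ 2) / 2) * (t * Real.exp (a * t)) := by
        apply mul_le_mul_of_nonneg_left (mul_le_mul_of_nonneg_left hI1 ht) (Real.exp_pos _).le
    _ = t * (Real.exp (-(t ^ 2 + a ^ 2) / 2) * Real.exp (a * t)) := by ring
    _ = t * Real.exp (-(t ^ 2 + a ^ 2) / 2 + a * t) := by rw [← Real.exp_add]
    _ ≤ (t * (t + a) + 1) * Real.exp (a * t - t ^ 2 / 2) := by
        apply mul_le_mul
        · nlinarith [sq_nonneg (t - 1)]
        · apply Real.exp_le_exp.2; nlinarith [sq_nonneg a]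
        · positivity
        · nlinarith

lemma marcum_hasDerivAt (b : ℝ) (hb : 0 < b) (a : ℝ) (ha : 0 < a) :
    HasDerivAt (fun a => marcumQ a b)
      (Real.exp (-(b ^ 2 + a ^ 2) / 2) * (b * besselI1 (a * b))) a := by
  set A : ℝ := 2 * a with hA
  have hA0 : 0 ≤ A := by positivity
  have hcf : ∀ x : ℝ, Continuous fun t : ℝ =>
      t * Real.exp (-(t ^ 2 + x ^ 2) / 2) * besselI0 (x * t) := by
    intro x
    exact (continuous_id.mul (by fun_prop)).mul (continuous_besselI0.comp (by fun_prop))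
  have hcf' : Continuous fun t : ℝ =>
      t * Real.exp (-(t ^ 2 + a ^ 2) / 2) * (t * besselI1 (a * t) - a * besselI0 (a * t)) := by
    have : Continuous fun t : ℝ => t * besselI1 (a * t) - a * besselI0 (a * t) :=
      (continuous_id.mul (continuous_besselI1.comp (by fun_prop))).sub
        (continuous_const.mul (continuous_besselI0.comp (by fun_prop)))
    exact (continuous_id.mul (by fun_prop)).mul this
  have hball : ∀ x ∈ ball a (a / 2), 0 ≤ x ∧ x ≤ A := by
    intro x hx
    have := abs_lt.1 (by simpa [Real.dist_eq] using mem_ball.1 hx)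
    constructor <;> [linarith [this.1]; {rw [hA]; linarith [this.2]}]
  have hbound_int : IntegrableOn
      (fun t : ℝ => 17 * Real.exp (A ^ 2 / 8 + 2 * A ^ 2) * Real.exp (-t ^ 2 / 4))
      (Ioi b) := integrable_bound _ b
  have hae : ∀ᵐ t ∂(volume.restrict (Ioi b)), 0 ≤ t := by
    rw [ae_restrict_iff' measurableSet_Ioi]
    filter_upwards with t ht
    exact le_of_lt (lt_trans hb ht)
  have key := hasDerivAt_integral_of_dominated_loc_of_deriv_le
    (μ := volume.restrict (Ioi b)) (x₀ := a)
    (F := fun x t => t * Real.exp (-(t ^ 2 + x ^ 2) / 2) * besselI0 (x * t))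
    (F' := fun x t => t * Real.exp (-(t ^ 2 + x ^ 2) / 2)
      * (t * besselI1 (x * t) - x * besselI0 (x * t)))
    (bound := fun t => 17 * Real.exp (A ^ 2 / 8 + 2 * A ^ 2) * Real.exp (-t ^ 2 / 4))
    (s := ball a (a / 2)) (ball_mem_nhds a (by positivity))
    (Filter.Eventually.of_forall fun x => ((hcf x).aestronglyMeasurable).restrict)
    ?_ (hcf'.aestronglyMeasurable).restrict ?_ hbound_int ?_
  · -- compute the integral of F' a
    have hint : Integrable (fun t => t * Real.exp (-(t ^ 2 + a ^ 2) / 2)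
        * (t * besselI1 (a * t) - a * besselI0 (a * t))) (volume.restrict (Ioi b)) := by
      apply hbound_int.mono' (hcf'.aestronglyMeasurable).restrict
      filter_upwards [hae] with t ht
      exact f'_bound A a t ha.le (by rw [hA]; linarith) ht
    have hFTC := integral_Ioi_of_hasDerivAt_of_tendsto'
      (f := fun t => Real.exp (-(t ^ 2 + a ^ 2) / 2) * (t * besselI1 (a * t)))
      (f' := fun t => -(t * Real.exp (-(t ^ 2 + a ^ 2) / 2)
        * (t * besselI1 (a * t) - a * besselI0 (a * t))))
      (a := b) (m := 0)
      (fun x _ => hasDerivAt_G a x) hint.neg (G_tendsto a ha)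
    rw [MeasureTheory.integral_neg] at hFTC
    have hval : (∫ t in Ioi b, t * Real.exp (-(t ^ 2 + a ^ 2) / 2)
        * (t * besselI1 (a * t) - a * besselI0 (a * t)))
        = Real.exp (-(b ^ 2 + a ^ 2) / 2) * (b * besselI1 (a * b)) := by linarith
    have h2 := key.2
    rw [hval] at h2
    exact h2
  · apply hbound_int.mono' ((hcf a).aestronglyMeasurable).restrict
    filter_upwards [hae] with t ht
    exact f_bound A a t ha.le (by rw [hA]; linarith) ht
  · filter_upwards [hae] with t ht x hx
    exact f'_bound A x t (hball x hx).1 (hball x hx).2 ht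
  · filter_upwards with t x _
    exact hasDerivAt_f t x

/-- For fixed `b > 0`, the first-order Marcum Q function `Q₁(a, b)` is strictly
increasing in `a` on `(0, ∞)`. -/
theorem stmt_8 (b : ℝ) (hb : 0 < b) : StrictMonoOn (fun a => marcumQ a b) (Set.Ioi 0) := by
  apply strictMonoOn_of_deriv_pos (convex_Ioi 0)
  · intro a ha
    exact (marcum_hasDerivAt b hb a ha).continuousAt.continuousWithinAt
  · intro a ha
    rw [interior_Ioi] at ha
    rw [(marcum_hasDerivAt b hb a ha).deriv]
    have h1 := besselI1_pos (a * b) (mul_pos ha hb)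
    positivity
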